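/- Let T, X, B ∈ ℚ[[t]] with T = 1 + tT^3, B = tT^2, X = B(1+X+X^2), and let T(u) ∈ ℚ[[t,u]] satisfy T(u) = 1 + tuT(u)^2T with constant term 1. Define H_0(u) = (1-X)·X·T(u) - (1+X)(1-X^2) and H_{-1}(u) = -(1+X)(1-X). Then T(u)·(H_0(u)/H_{-1}(u))·((1-X^2)/(1-X^3)) = T(u)·(1+B) - T(u)^2·B. -/

import Mathlib

/-- The ring `ℚ[[t,u]]`, realized as `ℚ[[t]][[u]]`. -/
abbrev QTU : Type := PowerSeries (PowerSeries ℚ)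

/-- The image of a series of `ℚ[[t]]` in `ℚ[[t,u]]`. -/
noncomputable def liftT (f : PowerSeries ℚ) : QTU := PowerSeries.C f

/-- The variable `t` in `ℚ[[t,u]]`. -/
noncomputable def tVar : QTU := liftT PowerSeries.X

/-- The variable `u` in `ℚ[[t,u]]`. -/
noncomputable def uVar : QTU := PowerSeries.X

/-!
Multiplying `X = B(1+X+X^2)` by `1 - X` gives `B(1-X^3) = X(1-X)`; after this substitution both
sides are the same polynomial in `T(u)` and `X`.
-/

section CommRing

variable {R : Type*} [CommRing R] {b x : R}

theorem mul_one_sub_pow_three_eq_of_eq_mul_one_add_add_sq (h : x = b * (1 + x + x ^ 2)) :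
    b * (1 - x ^ 3) = x * (1 - x) := by
  linear_combination (x - 1) * h

theorem core_fin_identity_of_eq_mul_one_add_add_sq (h : x = b * (1 + x + x ^ 2))
    (t : R) :
    t * ((1 - x) * x * t - (1 + x) * (1 - x ^ 2)) * (1 - x ^ 2)
      = (t * (1 + b) - t ^ 2 * b) * (-(1 + x) * (1 - x)) * (1 - x ^ 3) := by
  linear_combination (1 - x ^ 2) * (t - t ^ 2) * mul_one_sub_pow_three_eq_of_eq_mul_one_add_add_sq h

end CommRing

theorem core_series_equals_fin_series_general (B Xs : PowerSeries ℚ)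
    (hXs : Xs = B * (1 + Xs + Xs ^ 2))
    (Tu : QTU) :
    Tu * ((1 - liftT Xs) * liftT Xs * Tu - (1 + liftT Xs) * (1 - liftT (Xs ^ 2)))
        * (1 - liftT (Xs ^ 2))
      = (Tu * (1 + liftT B) - Tu ^ 2 * liftT B)
        * (-(1 + liftT Xs) * (1 - liftT Xs)) * (1 - liftT (Xs ^ 3)) := by
  have hlift : liftT Xs = liftT B * (1 + liftT Xs + liftT Xs ^ 2) := by
    simpa only [liftT, map_mul, map_add, map_pow, map_one] using congrArg liftT hXs
  simpa only [liftT, map_pow] using core_fin_identity_of_eq_mul_one_add_add_sq hlift Tu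

/-- With `T = 1 + tT^3`, `B = tT^2`, `X = B(1+X+X^2)` in `ℚ[[t]]`, and
`T(u) = 1 + tuT(u)^2T` in `ℚ[[t,u]]` (constant term 1),
`H_0(u) = (1-X)XT(u) - (1+X)(1-X^2)` and `H_{-1}(u) = -(1+X)(1-X)`, we have
`T(u)·(H_0(u)/H_{-1}(u))·((1-X^2)/(1-X^3)) = T(u)(1+B) - T(u)^2·B`,
stated multiplicatively as `T(u)·H_0(u)·(1-X^2) = (T(u)(1+B) - T(u)^2·B)·H_{-1}(u)·(1-X^3)`
(the cleared factors are invertible). -/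
theorem core_series_equals_fin_series (T B Xs : PowerSeries ℚ)
    (hT0 : PowerSeries.constantCoeff T = 1)
    (hT : T = 1 + PowerSeries.X * T ^ 3)
    (hB : B = PowerSeries.X * T ^ 2)
    (hXs0 : PowerSeries.constantCoeff Xs = 0)
    (hXs : Xs = B * (1 + Xs + Xs ^ 2))
    (Tu : QTU)
    (hTu0 : PowerSeries.constantCoeff (PowerSeries.constantCoeff Tu) = 1)
    (hTu : Tu = 1 + tVar * uVar * Tu ^ 2 * liftT T) :
    Tu * ((1 - liftT Xs) * liftT Xs * Tu - (1 + liftT Xs) * (1 - liftT (Xs ^ 2)))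
        * (1 - liftT (Xs ^ 2))
      = (Tu * (1 + liftT B) - Tu ^ 2 * liftT B)
        * (-(1 + liftT Xs) * (1 - liftT Xs)) * (1 - liftT (Xs ^ 3)) :=
  core_series_equals_fin_series_general B Xs hXs Tu
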